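/- Let k be a field, ≺ a local monomial order on ℕ^n, I an ideal of the polynomial ring k[x], and G a finite set of nonzero elements of I such that Exp_≺(I) = ⋃_{g∈G}(exp(g)+ℕ^n). Then G is a ≺-standard basis of the extended ideal Î = k[[x]]·I: every nonzero f ∈ Î can be written f = ∑_{g∈G} q_g g with q_g ∈ k[[x]] and, for each g with q_g ≠ 0, exp(q_g g) ≼ exp(f). -/

import Mathlib

open MvPowerSeries

noncomputable section

/-- A monomial order: a linear (strict total) order on an additive monoid of exponents,
compatible with addition. -/
structure IsMonomialOrder {M : Type*} [AddCommMonoid M] (lt : M → M → Prop) : Prop where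
  total : ∀ a b, lt a b ∨ a = b ∨ lt b a
  irrefl : ∀ a, ¬ lt a a
  trans : ∀ a b c, lt a b → lt b c → lt a c
  add_right : ∀ a b c, lt a b → lt (a + c) (b + c)

/-- A local monomial order: a monomial order for which `α ≼ 0` for every `α`. -/
structure IsLocalMonomialOrder {M : Type*} [AddCommMonoid M] (lt : M → M → Prop)
    extends IsMonomialOrder lt : Prop where
  le_zero : ∀ a, a = 0 ∨ lt a 0

/-- A monomial well order: a monomial order for which `0` is the least element. -/
structure IsWellMonomialOrder {M : Type*} [AddCommMonoid M] (lt : M → M → Prop)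
    extends IsMonomialOrder lt : Prop where
  zero_le : ∀ a, a = 0 ∨ lt 0 a

/-- The Newton diagram of a multivariate power series. -/
def ND {n : ℕ} {k : Type*} [Semiring k] (f : MvPowerSeries (Fin n) k) : Set (Fin n →₀ ℕ) :=
  {α | MvPowerSeries.coeff α f ≠ 0}

/-- `e` is the `lt`-greatest element of the Newton diagram of `f`, i.e. `e = exp(f)`. -/
def IsExp {n : ℕ} {k : Type*} [Semiring k] (lt : (Fin n →₀ ℕ) → (Fin n →₀ ℕ) → Prop)
    (f : MvPowerSeries (Fin n) k) (e : Fin n →₀ ℕ) : Prop :=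
  e ∈ ND f ∧ ∀ β ∈ ND f, β ≠ e → lt β e

/-- `e + ℕ^n`. -/
def upSet {n : ℕ} (e : Fin n →₀ ℕ) : Set (Fin n →₀ ℕ) := {α | ∃ γ, α = e + γ}

/-- The set of leading exponents of the nonzero elements of an ideal of power series. -/
def ExpSet {n : ℕ} {k : Type*} [Semiring k] (lt : (Fin n →₀ ℕ) → (Fin n →₀ ℕ) → Prop)
    (J : Ideal (MvPowerSeries (Fin n) k)) : Set (Fin n →₀ ℕ) :=
  {e | ∃ f ∈ J, IsExp lt f e}

/-- The region `Δ_j` of the partition of `ℕ^n` associated with `e_1, …, e_r`. -/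
def Delta {n r : ℕ} (e : Fin r → (Fin n →₀ ℕ)) (j : Fin r) : Set (Fin n →₀ ℕ) :=
  upSet (e j) \ ⋃ (i : Fin r) (_ : i < j), upSet (e i)

/-- The region `Δ̄` of the partition of `ℕ^n` associated with `e_1, …, e_r`. -/
def DeltaBar {n r : ℕ} (e : Fin r → (Fin n →₀ ℕ)) : Set (Fin n →₀ ℕ) :=
  (⋃ (i : Fin r), upSet (e i))ᶜ

/-- Condition (ii) of the division theorem: each quotient `q_j` is `0` or satisfies
`ND(q_j) + e_j ⊆ Δ_j`. -/
def QuotCond {n r : ℕ} {k : Type*} [Semiring k] (e : Fin r → (Fin n →₀ ℕ))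
    (q : Fin r → MvPowerSeries (Fin n) k) : Prop :=
  ∀ j, q j = 0 ∨ ∀ α ∈ ND (q j), α + e j ∈ Delta e j

/-- Condition (iii) of the division theorem: the remainder `R` is `0` or satisfies
`ND(R) ⊆ Δ̄`. -/
def RemCond {n r : ℕ} {k : Type*} [Semiring k] (e : Fin r → (Fin n →₀ ℕ))
    (R : MvPowerSeries (Fin n) k) : Prop :=
  R = 0 ∨ ND R ⊆ DeltaBar e

/-- `e` is the `lt`-greatest exponent of the nonzero polynomial `f`. -/
def IsExpP {n : ℕ} {k : Type*} [CommSemiring k]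
    (lt : (Fin n →₀ ℕ) → (Fin n →₀ ℕ) → Prop)
    (f : MvPolynomial (Fin n) k) (e : Fin n →₀ ℕ) : Prop :=
  e ∈ f.support ∧ ∀ β ∈ f.support, β ≠ e → lt β e

/-- The set of `lt`-leading exponents of the nonzero elements of a polynomial ideal. -/
def ExpSetP {n : ℕ} {k : Type*} [CommSemiring k]
    (lt : (Fin n →₀ ℕ) → (Fin n →₀ ℕ) → Prop)
    (I : Ideal (MvPolynomial (Fin n) k)) : Set (Fin n →₀ ℕ) :=
  {e | ∃ f ∈ I, IsExpP lt f e}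

/-!
For a local order every nonempty set of exponents has a `≺`-greatest element (by Dickson's
lemma), so leading exponents exist and one can divide by the `g j` as in Hironaka's division
theorem: the coefficients of the quotients are solved for by recursion from the `≺`-greater
exponents downwards, leaving a remainder supported outside `⋃ j, (e j + ℕ^n)`.

The remainder lies in `Î`, and leading exponents of `Î` are leading exponents of `I`: if `h ∈ Î`
has leading exponent `δ`, its truncations show that `x^δ ∈ I + J + 𝔪^d` for all `d`, where
`𝔪 = (x₁, …, xₙ)` and `J` is the ideal of polynomials supported strictly below `δ` (an ideal because
`≺` is local); Krull's intersection theorem then gives `(1 - r) x^δ ∈ I + J` with `r ∈ 𝔪`, which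
produces an element of `I` with leading exponent `δ`. So the remainder vanishes. Finally the
leading exponents of the `q j * g j` lie in the pairwise disjoint regions `Δ_j`, so none of them
cancels in the sum and each is `≼ exp(f)`.
-/

open Finset.HasAntidiagonal

theorem WellFounded.exists_eq_apply_of_dependsOn {α β : Type*} [Nonempty β] {r : α → α → Prop}
    (hr : WellFounded r) (F : (α → β) → α → β)
    (hF : ∀ w w' a, (∀ b, r b a → w b = w' b) → F w a = F w' a) :
    ∃ w : α → β, ∀ a, w a = F w a := by
  classical
  let restrict (a : α) (v : ∀ b, r b a → β) (b : α) : β :=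
    if h : r b a then v b h else Classical.arbitrary β
  refine ⟨hr.fix fun a v => F (restrict a v) a, fun a => ?_⟩
  rw [hr.fix_eq]
  exact hF _ _ a fun b hb => dif_pos hb

theorem MvPowerSeries.coeff_mul_eq_add_sum_snd_ne {σ R : Type*} [DecidableEq σ] [CommSemiring R]
    (φ ψ : MvPowerSeries σ R) (α e : σ →₀ ℕ) :
    coeff α (φ * ψ) = (if e ≤ α then coeff (α - e) φ * coeff e ψ else 0) +
      ∑ p ∈ antidiagonal α with p.2 ≠ e, coeff p.1 φ * coeff p.2 ψ := by
  rw [coeff_mul, ← Finset.sum_filter_add_sum_filter_not _ (fun p => p.2 = e)]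
  congr 1
  simp only [filter_snd_eq_antidiagonal α e]
  split_ifs <;> simp

theorem Ideal.exists_one_sub_mul_mem_of_forall_mem_sup_pow {R : Type*} [CommRing R]
    [IsNoetherianRing R] {N 𝔪 : Ideal R} {x : R} (hx : ∀ d : ℕ, x ∈ N ⊔ 𝔪 ^ d) :
    ∃ r ∈ 𝔪, (1 - r) * x ∈ N := by
  have hsmul : ∀ r y : R, r • Ideal.Quotient.mk N y = Ideal.Quotient.mk N (r * y) := fun r y => by
    rw [Algebra.smul_def, Ideal.Quotient.algebraMap_eq, map_mul]
  have hmem : Ideal.Quotient.mk N x ∈ (⨅ d : ℕ, 𝔪 ^ d • ⊤ : Submodule R (R ⧸ N)) := by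
    refine Submodule.mem_iInf _ |>.mpr fun d => ?_
    obtain ⟨a, ha, b, hb, rfl⟩ := Submodule.mem_sup.mp (hx d)
    rw [map_add, Ideal.Quotient.eq_zero_iff_mem.mpr ha, zero_add, ← mul_one b, ← hsmul]
    exact Submodule.smul_mem_smul hb Submodule.mem_top
  obtain ⟨⟨r, hr⟩, hrx⟩ := (𝔪.mem_iInf_smul_pow_eq_bot_iff _).mp hmem
  refine ⟨r, hr, Ideal.Quotient.eq_zero_iff_mem.mp ?_⟩
  rw [sub_mul, one_mul, map_sub, ← hsmul, hrx, sub_self]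

theorem MvPowerSeries.truncTotal_mem_sup_pow_idealOfVars {σ R : Type*} [Finite σ] [CommRing R]
    {I : Ideal (MvPolynomial σ R)} {h : MvPowerSeries σ R}
    (hh : h ∈ Ideal.span ((fun p : MvPolynomial σ R => (p : MvPowerSeries σ R)) '' (I : Set _)))
    (d : ℕ) : truncTotal d h ∈ I ⊔ MvPolynomial.idealOfVars σ R ^ d := by
  let φ := truncTotalAlgHom σ R d
  have hspan : Ideal.span ((fun p : MvPolynomial σ R => (p : MvPowerSeries σ R)) '' (I : Set _))
      ≤ (I.map (Ideal.Quotient.mk _)).comap φ := by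
    rw [Ideal.span_le]
    rintro _ ⟨p, hp, rfl⟩
    have : φ (p : MvPowerSeries σ R) = Ideal.Quotient.mk _ p := by
      simpa [MvPowerSeries.algebraMap_apply'] using φ.commutes p
    rw [SetLike.mem_coe, Ideal.mem_comap, this]
    exact Ideal.mem_map_of_mem _ hp
  simpa [φ] using hspan hh

namespace IsLocalMonomialOrder

variable {n : ℕ} {lt : (Fin n →₀ ℕ) → (Fin n →₀ ℕ) → Prop}

theorem lt_of_le_of_ne (hlt : IsLocalMonomialOrder lt) {a b : Fin n →₀ ℕ} (hab : a ≤ b)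
    (hne : a ≠ b) : lt b a := by
  obtain ⟨c, rfl⟩ := le_iff_exists_add.mp hab
  have hc : lt c 0 := (hlt.le_zero c).resolve_left (by rintro rfl; simp at hne)
  simpa [add_comm] using hlt.add_right c 0 a hc

theorem wellFounded_flip (hlt : IsLocalMonomialOrder lt) : WellFounded (flip lt) := by
  have : IsTrans _ lt := ⟨hlt.trans⟩
  refine wellFounded_iff_isEmpty_descending_chain.mpr ⟨fun ⟨u, hu⟩ => ?_⟩
  obtain ⟨i, j, hij, hle⟩ := wellQuasiOrdered_le u
  have hinc : lt (u i) (u j) := Nat.rel_of_forall_rel_succ_of_lt lt hu hij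
  rcases eq_or_ne (u i) (u j) with heq | hne
  · exact hlt.irrefl _ (heq ▸ hinc)
  · exact hlt.irrefl _ (hlt.trans _ _ _ hinc (hlt.lt_of_le_of_ne hle hne))

theorem exists_greatest (hlt : IsLocalMonomialOrder lt) {S : Set (Fin n →₀ ℕ)}
    (hS : S.Nonempty) : ∃ m ∈ S, ∀ x ∈ S, x ≠ m → lt x m := by
  obtain ⟨m, hm, hmax⟩ := hlt.wellFounded_flip.has_min S hS
  refine ⟨m, hm, fun x hx hne => ?_⟩
  rcases hlt.total x m with h | h | h
  exacts [h, absurd h hne, absurd h (hmax x hx)]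

theorem isUpperSet_setOf_lt (hlt : IsLocalMonomialOrder lt) (δ : Fin n →₀ ℕ) :
    IsUpperSet {β | lt β δ} := by
  intro β β' hle hβ
  rcases eq_or_ne β β' with rfl | hne
  exacts [hβ, hlt.trans _ _ _ (hlt.lt_of_le_of_ne hle hne) hβ]

end IsLocalMonomialOrder

namespace IsMonomialOrder

variable {M : Type*} [AddCommMonoid M] {lt : M → M → Prop}

theorem le_trans (hlt : IsMonomialOrder lt) {a b c : M} (hab : a = b ∨ lt a b)
    (hbc : b = c ∨ lt b c) : a = c ∨ lt a c := by
  rcases hab with rfl | hab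
  · exact hbc
  rcases hbc with rfl | hbc
  exacts [Or.inr hab, Or.inr (hlt.trans _ _ _ hab hbc)]

theorem add_lt_add (hlt : IsMonomialOrder lt) {x a y b : M} (hx : x = a ∨ lt x a)
    (hy : y = b ∨ lt y b) (hne : x ≠ a ∨ y ≠ b) : lt (x + y) (a + b) := by
  rcases hx with rfl | hx
  · rcases hy with rfl | hy
    · simp at hne
    · simpa [add_comm x] using hlt.add_right y b x hy
  · have h₁ := hlt.add_right x a y hx
    rcases hy with rfl | hy
    · exact h₁
    · have h₂ := hlt.add_right y b a hy
      rw [add_comm y, add_comm b] at h₂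
      exact hlt.trans _ _ _ h₁ h₂

end IsMonomialOrder

section Exp

variable {n : ℕ} {k : Type*} {lt : (Fin n →₀ ℕ) → (Fin n →₀ ℕ) → Prop}

theorem IsExp.le_of_mem [Semiring k] {f : MvPowerSeries (Fin n) k} {a β : Fin n →₀ ℕ}
    (ha : IsExp lt f a) (hβ : β ∈ ND f) : β = a ∨ lt β a := by
  rcases eq_or_ne β a with h | h
  exacts [Or.inl h, Or.inr (ha.2 β hβ h)]

theorem IsExp.unique [Semiring k] (hlt : IsMonomialOrder lt) {f : MvPowerSeries (Fin n) k}
    {a b : Fin n →₀ ℕ} (ha : IsExp lt f a) (hb : IsExp lt f b) : a = b := by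
  by_contra hne
  exact hlt.irrefl a (hlt.trans _ _ _ (hb.2 a ha.1 hne) (ha.2 b hb.1 (Ne.symm hne)))

theorem IsExp.ne_zero [Semiring k] {f : MvPowerSeries (Fin n) k} {a : Fin n →₀ ℕ}
    (ha : IsExp lt f a) : f ≠ 0 := by
  rintro rfl
  exact ha.1 (map_zero _)

theorem exists_isExp [Semiring k] (hlt : IsLocalMonomialOrder lt)
    {f : MvPowerSeries (Fin n) k} (hf : f ≠ 0) : ∃ a, IsExp lt f a := by
  obtain ⟨a, ha, hmax⟩ :=
    hlt.exists_greatest (S := ND f) ((ne_zero_iff_exists_coeff_ne_zero f).mp hf)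
  exact ⟨a, ha, hmax⟩

theorem isExp_coe [CommSemiring k] {p : MvPolynomial (Fin n) k} {a : Fin n →₀ ℕ}
    (ha : IsExpP lt p a) : IsExp lt (p : MvPowerSeries (Fin n) k) a := by
  simpa [IsExp, IsExpP, ND] using ha

theorem isExp_mul [Semiring k] [NoZeroDivisors k] (hlt : IsMonomialOrder lt)
    {u v : MvPowerSeries (Fin n) k} {a b : Fin n →₀ ℕ} (hu : IsExp lt u a)
    (hv : IsExp lt v b) : IsExp lt (u * v) (a + b) := by
  classical
  have hterm : ∀ p : (Fin n →₀ ℕ) × (Fin n →₀ ℕ), p ≠ (a, b) →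
      coeff p.1 u * coeff p.2 v ≠ 0 → lt (p.1 + p.2) (a + b) := by
    rintro ⟨x, y⟩ hne hxy
    refine hlt.add_lt_add (hu.le_of_mem (left_ne_zero_of_mul hxy))
      (hv.le_of_mem (right_ne_zero_of_mul hxy)) ?_
    by_contra! h
    exact hne (Prod.ext h.1 h.2)
  refine ⟨?_, fun β hβ hne => ?_⟩
  · have hcoeff : coeff (a + b) (u * v) = coeff a u * coeff b v := by
      rw [coeff_mul, Finset.sum_eq_single_of_mem (a, b) (by simp)]
      intro p hp hne
      by_contra h
      rw [mem_antidiagonal] at hp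
      exact hlt.irrefl _ (hp ▸ hterm p hne h)
    simpa [ND, hcoeff] using mul_ne_zero hu.1 hv.1
  · have hβ' : coeff β (u * v) ≠ 0 := hβ
    rw [coeff_mul] at hβ'
    obtain ⟨p, hp, h⟩ := Finset.exists_ne_zero_of_sum_ne_zero hβ'
    rw [mem_antidiagonal] at hp
    refine hp ▸ hterm p ?_ h
    rintro rfl
    exact hne hp.symm

/-- The greatest of the leading exponents of the summands cannot cancel in the sum. -/
theorem IsExp.le_exp_sum [Semiring k] {ι : Type*} [Fintype ι] {h : ι → MvPowerSeries (Fin n) k}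
    {i : ι} {a : Fin n →₀ ℕ} (ha : IsExp lt (h i) a) (hlt : IsLocalMonomialOrder lt)
    (hinj : ∀ i j a, IsExp lt (h i) a → IsExp lt (h j) a → i = j)
    {ef : Fin n →₀ ℕ} (hf : IsExp lt (∑ i, h i) ef) : a = ef ∨ lt a ef := by
  obtain ⟨m, ⟨i₀, hm⟩, hmax⟩ :=
    hlt.exists_greatest (S := {b | ∃ j, IsExp lt (h j) b}) ⟨a, i, ha⟩
  have hcoeff : coeff m (∑ j, h j) = coeff m (h i₀) := by
    rw [map_sum, Finset.sum_eq_single i₀ _ (by simp)]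
    intro j _ hj
    by_contra hmj
    obtain ⟨b, hb⟩ := exists_isExp hlt (f := h j) (fun h0 => hmj (by rw [h0, map_zero]))
    have hbm : b ≠ m := fun hbm => hj (hinj j i₀ m (hbm ▸ hb) hm)
    rcases hb.le_of_mem hmj with rfl | hmb
    · exact hbm rfl
    · exact hlt.irrefl _ (hlt.trans _ _ _ hmb (hmax b ⟨j, hb⟩ hbm))
  have hmf : m = ef ∨ lt m ef := hf.le_of_mem (show coeff m _ ≠ 0 from hcoeff ▸ hm.1)
  refine hlt.le_trans ?_ hmf
  rcases eq_or_ne a m with h | h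
  exacts [Or.inl h, Or.inr (hmax a ⟨i, ha⟩ h)]

end Exp

section Extension

variable {n : ℕ} {k : Type*} {lt : (Fin n →₀ ℕ) → (Fin n →₀ ℕ) → Prop}

theorem isExpP_monomial_sub [CommRing k] (hlt : IsMonomialOrder lt) {δ : Fin n →₀ ℕ} {c : k}
    (hc : c ≠ 0) {b : MvPolynomial (Fin n) k} (hb : ∀ β ∈ b.support, lt β δ) :
    IsExpP lt (MvPolynomial.monomial δ c - b) δ := by
  classical
  have hbδ : MvPolynomial.coeff δ b = 0 :=
    MvPolynomial.notMem_support_iff.mp fun hδ => hlt.irrefl δ (hb δ hδ)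
  refine ⟨by simpa [hbδ] using hc, fun β hβ hne => hb β ?_⟩
  simpa [MvPolynomial.coeff_monomial, Ne.symm hne] using hβ

theorem IsLocalMonomialOrder.lt_of_mem_support_mul_monomial [CommRing k]
    (hlt : IsLocalMonomialOrder lt) {r : MvPolynomial (Fin n) k}
    (hr : r ∈ MvPolynomial.idealOfVars (Fin n) k) {δ β : Fin n →₀ ℕ} {c : k}
    (hβ : β ∈ (r * MvPolynomial.monomial δ c).support) : lt β δ := by
  classical
  rw [MvPolynomial.mem_support_iff, MvPolynomial.coeff_mul_monomial'] at hβ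
  split_ifs at hβ with hle
  · refine hlt.lt_of_le_of_ne hle fun hδβ => ?_
    have hr0 : MvPolynomial.coeff 0 r = 0 := by
      simpa using (MvPolynomial.mem_pow_idealOfVars_iff' 1 r).mp (by simpa using hr) 0
    simp [← hδβ, hr0] at hβ
  · exact absurd rfl hβ

theorem mem_expSetP_of_mem_span [CommRing k] [IsNoetherianRing k]
    (hlt : IsLocalMonomialOrder lt) {I : Ideal (MvPolynomial (Fin n) k)}
    {h : MvPowerSeries (Fin n) k}
    (hh : h ∈ Ideal.span
      ((fun p : MvPolynomial (Fin n) k => (p : MvPowerSeries (Fin n) k)) '' (I : Set _)))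
    {δ : Fin n →₀ ℕ} (hδ : IsExp lt h δ) : δ ∈ ExpSetP lt I := by
  classical
  set c := coeff δ h
  let J := MvPolynomial.restrictSupportIdeal k _ (hlt.isUpperSet_setOf_lt δ)
  have happrox : ∀ d : ℕ,
      MvPolynomial.monomial δ c ∈ (I ⊔ J) ⊔ MvPolynomial.idealOfVars (Fin n) k ^ d := by
    intro d
    set d' := max d (δ.degree + 1)
    have hlow : MvPolynomial.monomial δ c - truncTotal d' h ∈ J := by
      refine (MvPolynomial.mem_restrictSupport_iff (R := k)).mpr fun β hβ => ?_
      rw [Finset.mem_coe, MvPolynomial.mem_support_iff, MvPolynomial.coeff_sub,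
        MvPolynomial.coeff_monomial, coeff_truncTotal_eq_ite] at hβ
      rcases eq_or_ne δ β with rfl | hne
      · simp [c, show δ.degree < d' by omega] at hβ
      · refine hδ.2 β (fun h0 => hβ ?_) hne.symm
        simp [hne, h0]
    have hle : I ⊔ MvPolynomial.idealOfVars (Fin n) k ^ d' ≤
        (I ⊔ J) ⊔ MvPolynomial.idealOfVars (Fin n) k ^ d :=
      sup_le_sup le_sup_left (Ideal.pow_le_pow_right (le_max_left _ _))
    rw [← sub_add_cancel (MvPolynomial.monomial δ c) (truncTotal d' h)]
    exact add_mem (Ideal.mem_sup_left (Ideal.mem_sup_right hlow))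
      (hle (truncTotal_mem_sup_pow_idealOfVars hh d'))
  obtain ⟨r, hr, hrδ⟩ := Ideal.exists_one_sub_mul_mem_of_forall_mem_sup_pow happrox
  obtain ⟨a, ha, b, hb, hab⟩ := Submodule.mem_sup.mp hrδ
  have hb' : b + r * MvPolynomial.monomial δ c ∈ J :=
    J.add_mem hb fun β hβ => hlt.lt_of_mem_support_mul_monomial hr hβ
  refine ⟨a, ha, ?_⟩
  rw [show a = MvPolynomial.monomial δ c - (b + r * MvPolynomial.monomial δ c) by
    linear_combination hab]
  exact isExpP_monomial_sub hlt.toIsMonomialOrder hδ.1 hb'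

theorem eq_zero_of_remCond {r : ℕ} [CommRing k] [IsNoetherianRing k]
    (hlt : IsLocalMonomialOrder lt) {I : Ideal (MvPolynomial (Fin n) k)} {e : Fin r → (Fin n →₀ ℕ)}
    (hGB : ExpSetP lt I = ⋃ j, upSet (e j)) {R : MvPowerSeries (Fin n) k}
    (hRI : R ∈ Ideal.span
      ((fun p : MvPolynomial (Fin n) k => (p : MvPowerSeries (Fin n) k)) '' (I : Set _)))
    (hR : RemCond e R) : R = 0 := by
  rcases hR with h | hND
  · exact h
  by_contra hne
  obtain ⟨ρ, hρ⟩ := exists_isExp hlt hne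
  exact hND hρ.1 (hGB ▸ mem_expSetP_of_mem_span hlt hRI hρ)

end Extension

section Delta

variable {n r : ℕ} {e : Fin r → (Fin n →₀ ℕ)}

theorem mem_upSet_iff {a α : Fin n →₀ ℕ} : α ∈ upSet a ↔ a ≤ α :=
  le_iff_exists_add.symm

theorem le_of_mem_Delta {j : Fin r} {α : Fin n →₀ ℕ} (h : α ∈ Delta e j) : e j ≤ α :=
  mem_upSet_iff.mp h.1

theorem eq_of_mem_Delta {i j : Fin r} {α : Fin n →₀ ℕ} (hi : α ∈ Delta e i)
    (hj : α ∈ Delta e j) : i = j := by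
  by_contra hne
  rcases lt_or_gt_of_ne hne with h | h
  · exact hj.2 (Set.mem_biUnion h hi.1)
  · exact hi.2 (Set.mem_biUnion h hj.1)

theorem exists_mem_Delta {α : Fin n →₀ ℕ} (hα : α ∈ ⋃ i, upSet (e i)) :
    ∃ j, α ∈ Delta e j := by
  obtain ⟨j, hj, hmin⟩ := wellFounded_lt.has_min {i | α ∈ upSet (e i)} (Set.mem_iUnion.mp hα)
  refine ⟨j, hj, fun hlow => ?_⟩
  obtain ⟨i, hi⟩ := Set.mem_iUnion.mp hlow
  obtain ⟨hij, hi⟩ := Set.mem_iUnion.mp hi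
  exact hmin i hi hij

end Delta

section Division

variable {n r : ℕ} {k : Type*} [Field k] {lt : (Fin n →₀ ℕ) → (Fin n →₀ ℕ) → Prop}
  {e : Fin r → (Fin n →₀ ℕ)}

open Classical in
def divisionQuotient (e : Fin r → (Fin n →₀ ℕ)) (w : (Fin n →₀ ℕ) → k) (j : Fin r) :
    MvPowerSeries (Fin n) k :=
  fun γ => if γ + e j ∈ Delta e j then w (γ + e j) else 0

open Classical in
theorem coeff_divisionQuotient (w : (Fin n →₀ ℕ) → k) (j : Fin r) (γ : Fin n →₀ ℕ) :
    coeff γ (divisionQuotient e w j) = if γ + e j ∈ Delta e j then w (γ + e j) else 0 :=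
  rfl

theorem quotCond_divisionQuotient (w : (Fin n →₀ ℕ) → k) :
    QuotCond e (divisionQuotient e w) := by
  refine fun j => Or.inr fun γ hγ => ?_
  by_contra h
  exact hγ (by rw [coeff_divisionQuotient, if_neg h])

def lowerTerms (G : Fin r → MvPowerSeries (Fin n) k) (e : Fin r → (Fin n →₀ ℕ))
    (w : (Fin n →₀ ℕ) → k) (α : Fin n →₀ ℕ) : k :=
  ∑ j, ∑ p ∈ antidiagonal α with p.2 ≠ e j,
    coeff p.1 (divisionQuotient e w j) * coeff p.2 (G j)

theorem coeff_sum_divisionQuotient_mul (G : Fin r → MvPowerSeries (Fin n) k)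
    (w : (Fin n →₀ ℕ) → k) {α : Fin n →₀ ℕ} {j₀ : Fin r} (hα : α ∈ Delta e j₀) :
    coeff α (∑ j, divisionQuotient e w j * G j) =
      w α * coeff (e j₀) (G j₀) + lowerTerms G e w α := by
  have hlead : ∀ j, (if e j ≤ α then coeff (α - e j) (divisionQuotient e w j) * coeff (e j) (G j)
      else 0) = if j = j₀ then w α * coeff (e j₀) (G j₀) else 0 := by
    intro j
    by_cases hj : j = j₀
    · subst hj
      simp [le_of_mem_Delta hα, coeff_divisionQuotient, tsub_add_cancel_of_le, hα]
    · have : α ∉ Delta e j := fun h => hj (eq_of_mem_Delta h hα)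
      split_ifs with hle
      · simp [coeff_divisionQuotient, tsub_add_cancel_of_le hle, this]
      · rfl
  rw [map_sum, Finset.sum_congr rfl fun j _ =>
    MvPowerSeries.coeff_mul_eq_add_sum_snd_ne _ _ α (e j), Finset.sum_add_distrib]
  simp only [hlead, Finset.sum_ite_eq', Finset.mem_univ, if_true, lowerTerms]

theorem lowerTerms_congr (hlt : IsMonomialOrder lt) {G : Fin r → MvPowerSeries (Fin n) k}
    (he : ∀ j, IsExp lt (G j) (e j)) {w w' : (Fin n →₀ ℕ) → k} {α : Fin n →₀ ℕ}
    (hww' : ∀ β, lt α β → w β = w' β) : lowerTerms G e w α = lowerTerms G e w' α := by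
  refine Finset.sum_congr rfl fun j _ => Finset.sum_congr rfl fun p hp => ?_
  rw [Finset.mem_filter, mem_antidiagonal] at hp
  by_cases hG : coeff p.2 (G j) = 0
  · simp [hG]
  have hlt' : lt α (p.1 + e j) := by
    rw [← hp.1]
    simpa [add_comm p.1] using hlt.add_right _ _ p.1 ((he j).2 p.2 hG hp.2)
  simp [coeff_divisionQuotient, hww' _ hlt']

theorem exists_division (hlt : IsLocalMonomialOrder lt) (G : Fin r → MvPowerSeries (Fin n) k)
    (he : ∀ j, IsExp lt (G j) (e j)) (f : MvPowerSeries (Fin n) k) :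
    ∃ q : Fin r → MvPowerSeries (Fin n) k, ∃ R,
      f = ∑ j, q j * G j + R ∧ QuotCond e q ∧ RemCond e R := by
  classical
  let F (w : (Fin n →₀ ℕ) → k) (α : Fin n →₀ ℕ) : k :=
    if h : ∃ j, α ∈ Delta e j then
      (coeff (e h.choose) (G h.choose))⁻¹ * (coeff α f - lowerTerms G e w α)
    else 0
  obtain ⟨w, hw⟩ := hlt.wellFounded_flip.exists_eq_apply_of_dependsOn F fun w w' α hww' => by
    simp only [F, lowerTerms_congr hlt.toIsMonomialOrder he hww']
  refine ⟨divisionQuotient e w, f - ∑ j, divisionQuotient e w j * G j, by abel,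
    quotCond_divisionQuotient w, Or.inr fun α hα hmem => hα ?_⟩
  obtain ⟨j₀, hj₀⟩ := exists_mem_Delta hmem
  have hex : ∃ j, α ∈ Delta e j := ⟨j₀, hj₀⟩
  have hchoose : hex.choose = j₀ := eq_of_mem_Delta hex.choose_spec hj₀
  have hlead : coeff (e j₀) (G j₀) ≠ 0 := (he j₀).1
  rw [map_sub, coeff_sum_divisionQuotient_mul G w hj₀, hw, show F w α = _ from dif_pos hex,
    hchoose]
  field_simp
  ring

theorem mem_Delta_of_isExp_mul (hlt : IsLocalMonomialOrder lt)
    {G : Fin r → MvPowerSeries (Fin n) k} (he : ∀ j, IsExp lt (G j) (e j))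
    {q : Fin r → MvPowerSeries (Fin n) k} (hq : QuotCond e q) {j : Fin r}
    {a : Fin n →₀ ℕ} (ha : IsExp lt (q j * G j) a) : a ∈ Delta e j := by
  have hqj : q j ≠ 0 := by
    rintro h
    exact ha.ne_zero (by rw [h, zero_mul])
  obtain ⟨b, hb⟩ := exists_isExp hlt hqj
  rw [ha.unique hlt.toIsMonomialOrder (isExp_mul hlt.toIsMonomialOrder hb (he j))]
  exact (hq j).resolve_left hqj b hb.1

end Division

theorem standardBasis_of_extension_general {n : ℕ} (k : Type) [Field k]
    (lt : (Fin n →₀ ℕ) → (Fin n →₀ ℕ) → Prop) (hlt : IsLocalMonomialOrder lt)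
    (I : Ideal (MvPolynomial (Fin n) k))
    {r : ℕ} (g : Fin r → MvPolynomial (Fin n) k)
    (hgI : ∀ j, g j ∈ I)
    (e : Fin r → (Fin n →₀ ℕ)) (he : ∀ j, IsExpP lt (g j) (e j))
    (hGB : ExpSetP lt I = ⋃ j, upSet (e j)) :
    ∀ f ∈ Ideal.span
      ((fun p : MvPolynomial (Fin n) k => (p : MvPowerSeries (Fin n) k)) '' (I : Set _)),
      f ≠ 0 → ∀ ef, IsExp lt f ef →
      ∃ q : Fin r → MvPowerSeries (Fin n) k,
        f = (∑ j, q j * (g j : MvPowerSeries (Fin n) k)) ∧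
        ∀ j, q j = 0 ∨ ∃ ej, IsExp lt (q j * (g j : MvPowerSeries (Fin n) k)) ej ∧
          (ej = ef ∨ lt ej ef) := by
  intro f hf _ ef hef
  have hG : ∀ j, IsExp lt (g j : MvPowerSeries (Fin n) k) (e j) := fun j => isExp_coe (he j)
  obtain ⟨q, R, hdiv, hq, hR⟩ := exists_division hlt _ hG f
  have hRI : R ∈ Ideal.span
      ((fun p : MvPolynomial (Fin n) k => (p : MvPowerSeries (Fin n) k)) '' (I : Set _)) := by
    rw [show R = f - ∑ j, q j * (g j : MvPowerSeries (Fin n) k) by rw [hdiv]; abel]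
    exact sub_mem hf
      (sum_mem fun j _ => Ideal.mul_mem_left _ _ (Ideal.subset_span ⟨_, hgI j, rfl⟩))
  rw [eq_zero_of_remCond hlt hGB hRI hR, add_zero] at hdiv
  refine ⟨q, hdiv, fun j => (eq_or_ne (q j) 0).imp_right fun hqj => ?_⟩
  obtain ⟨a, ha⟩ := exists_isExp hlt hqj
  have hexp := isExp_mul hlt.toIsMonomialOrder ha (hG j)
  refine ⟨_, hexp, IsExp.le_exp_sum (h := fun i => q i * (g i : MvPowerSeries (Fin n) k)) hexp hlt
    (fun i i' b hi hi' => ?_) (hdiv ▸ hef)⟩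
  exact eq_of_mem_Delta (mem_Delta_of_isExp_mul hlt hG hq hi) (mem_Delta_of_isExp_mul hlt hG hq hi')

/-- if `G = {g_1, …, g_r} ⊆ I ⊆ k[x]` satisfies
`Exp_≺(I) = ⋃_j (exp(g_j) + ℕ^n)` for a local order `≺`, then `G` is a `≺`-standard basis
of `Î = k[[x]]·I`: every nonzero `f ∈ Î` has a standard representation
`f = ∑_j q_j g_j` with `q_j ∈ k[[x]]` and `exp(q_j g_j) ≼ exp(f)` whenever `q_j ≠ 0`. -/
theorem standardBasis_of_extension {n : ℕ} (hn : 1 ≤ n) (k : Type) [Field k]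
    (lt : (Fin n →₀ ℕ) → (Fin n →₀ ℕ) → Prop) (hlt : IsLocalMonomialOrder lt)
    (I : Ideal (MvPolynomial (Fin n) k))
    {r : ℕ} (g : Fin r → MvPolynomial (Fin n) k)
    (hgI : ∀ j, g j ∈ I) (hgne : ∀ j, g j ≠ 0)
    (e : Fin r → (Fin n →₀ ℕ)) (he : ∀ j, IsExpP lt (g j) (e j))
    (hGB : ExpSetP lt I = ⋃ j, upSet (e j)) :
    ∀ f ∈ Ideal.span
      ((fun p : MvPolynomial (Fin n) k => (p : MvPowerSeries (Fin n) k)) '' (I : Set _)),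
      f ≠ 0 → ∀ ef, IsExp lt f ef →
      ∃ q : Fin r → MvPowerSeries (Fin n) k,
        f = (∑ j, q j * (g j : MvPowerSeries (Fin n) k)) ∧
        ∀ j, q j = 0 ∨ ∃ ej, IsExp lt (q j * (g j : MvPowerSeries (Fin n) k)) ej ∧
          (ej = ef ∨ lt ej ef) :=
  standardBasis_of_extension_general k lt hlt I g hgI e he hGB
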